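/- arXiv:2409.14788 — 2 statements merged into one kernel-verified Lean document; each statement's English description precedes it below -/
import Mathlib

section
/- Let a and n be integers with a ≥ 5, a ≡ 1 (mod 4), n ≥ 3, n ≡ 2 (mod 4), and a(n−2) ≥ 4n. Then the Frobenius number of the triple {S_{a,n}, S_{a,n+1}, S_{a,n+2}} equals (2n−2)·S_{a,n+1} + ((a(n−2)+4n−4)/4)·S_{a,n+2} − S_{a,n}. -/
/-!
Write `A, B, C` for the three star numbers and put `n = 4m + 2`, `s = am - n`. Then
`A = 4n(n + s) + 1`, `B = A + a(2n - 1)`, `C = A + 4an`, and `a` is a unit modulo `A`.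
The `A` numbers `yB + zC` with `(y, z)` in the L-shaped staircase
`[0, 4n) × [0, s] ∪ [0, 2n - 1) × (s, s + 2n)` are pairwise incongruent modulo `A`, because the
lattice `{(y, z) | A ∣ y(2n - 1) + 4nz}` has basis `(4n, -(2n - 1))`, `(2n - 1, s + 1)`; and every
`yB + zC` descends to one of them by subtracting multiples of `A`. So they form the Apéry set of
`⟨A, B, C⟩` with respect to `A`. As `(2n + 1)B ≤ (2n - 1)C`, its maximum sits at the corner
`(2n - 2, s + 2n - 1)`, and the Frobenius number is that maximum minus `A`.
-/

/-- The 2-step star number `S_{a,n} = a·n·(n−2) + 1`. -/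
def twoStepStar (a n : ℕ) : ℕ := a * n * (n - 2) + 1

open Finset

theorem frobeniusNumber_of_modEq {S : Set ℕ} {A g : ℕ} (hA : A ∈ AddSubmonoid.closure S)
    (hcover : ∀ k, ∃ x ∈ AddSubmonoid.closure S, x ≤ g + A ∧ x ≡ k [MOD A])
    (hmin : ∀ x ∈ AddSubmonoid.closure S, x ≡ g [MOD A] → g + A ≤ x) :
    FrobeniusNumber g S := by
  rw [frobeniusNumber_iff]
  refine ⟨fun hg ↦ ?_, fun k hk ↦ ?_⟩
  · obtain rfl : A = 0 := by have := hmin g hg rfl; omega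
    obtain ⟨x, -, hx, hxk⟩ := hcover (g + 1)
    rw [Nat.modEq_zero_iff] at hxk
    omega
  · obtain ⟨x, hx, hxA, hxk⟩ := hcover k
    have hxk' : x ≤ k := by
      by_contra! hkx
      have := Nat.le_of_dvd (by omega) ((Nat.modEq_iff_dvd' hkx.le).mp hxk.symm)
      omega
    obtain ⟨d, hd⟩ := (Nat.modEq_iff_dvd' hxk').mp hxk
    rw [show k = x + d • A by rw [smul_eq_mul, mul_comm]; omega]
    exact add_mem hx (nsmul_mem hA d)

theorem AddSubmonoid.mem_closure_triple {M : Type*} [AddCommMonoid M] {a b c x : M} :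
    x ∈ closure ({a, b, c} : Set M) ↔ ∃ u y z : ℕ, u • a + y • b + z • c = x := by
  rw [Set.insert_eq, closure_union, mem_sup]
  simp_rw [mem_closure_singleton, mem_closure_pair]
  constructor
  · rintro ⟨_, ⟨u, rfl⟩, _, ⟨y, z, rfl⟩, rfl⟩
    exact ⟨u, y, z, add_assoc ..⟩
  · rintro ⟨u, y, z, rfl⟩
    exact ⟨_, ⟨u, rfl⟩, _, ⟨y, z, rfl⟩, (add_assoc ..).symm⟩

def staircase (n s : ℕ) : Finset (ℕ × ℕ) :=
  range (4 * n) ×ˢ range (s + 1) ∪ range (2 * n - 1) ×ˢ Ico (s + 1) (s + 2 * n)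

section Staircase

variable {n s : ℕ}

theorem mem_staircase {p : ℕ × ℕ} :
    p ∈ staircase n s ↔ p.1 < 4 * n ∧ p.2 ≤ s ∨ p.1 + 1 < 2 * n ∧ s < p.2 ∧ p.2 < s + 2 * n := by
  simp only [staircase, mem_union, mem_product, mem_range, mem_Ico]
  omega

theorem card_staircase (hn : 0 < n) : #(staircase n s) = 4 * n * (n + s) + 1 := by
  have hdisj : Disjoint (range (4 * n) ×ˢ range (s + 1))
      (range (2 * n - 1) ×ˢ Ico (s + 1) (s + 2 * n)) := by
    rw [disjoint_left]
    intro p hp hp'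
    simp only [mem_product, mem_range, mem_Ico] at hp hp'
    omega
  rw [staircase, card_union_of_disjoint hdisj, card_product, card_product, card_range, card_range,
    card_range, Nat.card_Ico]
  zify [show 1 ≤ 2 * n by omega, show s + 1 ≤ s + 2 * n by omega]
  ring

theorem weight_lt_of_mem_staircase {p : ℕ × ℕ} (hp : p ∈ staircase n s) :
    (p.1 : ℤ) * (2 * n - 1) + 4 * n * p.2 < 3 * (4 * n * (n + s) + 1) := by
  rw [mem_staircase] at hp
  rcases hp with ⟨hy, hz⟩ | ⟨hy, -, hz⟩
  · have hy' : (p.1 : ℤ) ≤ 4 * n - 1 := by omega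
    have hz' : (p.2 : ℤ) ≤ s := by omega
    nlinarith
  · have hy' : (p.1 : ℤ) ≤ 2 * n - 2 := by omega
    have hz' : (p.2 : ℤ) ≤ s + 2 * n - 1 := by omega
    nlinarith

theorem eq_of_mem_staircase_of_dvd {p q : ℕ × ℕ} (hp : p ∈ staircase n s) (hq : q ∈ staircase n s)
    (h : (4 * n * (n + s) + 1 : ℤ) ∣ (p.1 - q.1 : ℤ) * (2 * n - 1) + 4 * n * (p.2 - q.2)) :
    p = q := by
  obtain ⟨k, hk⟩ := h
  have hp' := weight_lt_of_mem_staircase hp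
  have hq' := weight_lt_of_mem_staircase hq
  rw [mem_staircase] at hp hq
  have hn : (0 : ℤ) < n := by omega
  have hφ : (0 : ℤ) ≤ q.1 * (2 * n - 1) + 4 * n * q.2 := by
    have : (0 : ℤ) ≤ 2 * n - 1 := by omega
    positivity
  obtain ⟨hk_lo, hk_hi⟩ : -3 < k ∧ k < 3 := by
    constructor <;> by_contra! <;> nlinarith
  -- `(2n - 1)² ≡ 1 mod 4n`, so `p - q = k • (2n - 1, s + 1) + v • (4n, -(2n - 1))`.
  obtain ⟨v, hv⟩ : ∃ v : ℤ, (p.1 - q.1 : ℤ) = k * (2 * n - 1) + 4 * n * v :=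
    ⟨k * (2 * n - 1) * (n + s) - (2 * n - 1) * (p.2 - q.2) - (p.1 - q.1) * (n - 1),
      by linear_combination (2 * (n : ℤ) - 1) * hk⟩
  have hz : (p.2 - q.2 : ℤ) = k * (s + 1) - v * (2 * n - 1) := by
    have : (4 * n : ℤ) * (p.2 - q.2) = 4 * n * (k * (s + 1) - v * (2 * n - 1)) := by
      linear_combination hk - (2 * (n : ℤ) - 1) * hv
    exact mul_left_cancel₀ (by positivity) this
  have hdy : -(4 * n : ℤ) < p.1 - q.1 ∧ (p.1 - q.1 : ℤ) < 4 * n := by omega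
  interval_cases k <;>
  · obtain ⟨hv_lo, hv_hi⟩ : -2 < v ∧ v < 2 := by constructor <;> by_contra! <;> nlinarith
    interval_cases v <;> ext <;> omega

end Staircase

section Generators

variable {n s a A B C : ℕ}

theorem dvd_weight_sub_of_modEq (hn : 0 < n) (hcop : a.Coprime A) (hB : B = A + a * (2 * n - 1))
    (hC : C = A + 4 * a * n) {y z y' z' : ℕ} (h : y * B + z * C ≡ y' * B + z' * C [MOD A]) :
    (A : ℤ) ∣ (y - y' : ℤ) * (2 * n - 1) + 4 * n * (z - z') := by
  have hB' : (B : ℤ) = A + a * (2 * n - 1) := by rw [hB]; push_cast [show 1 ≤ 2 * n by omega]; ring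
  obtain ⟨c, hc⟩ := (Nat.modEq_iff_dvd.mp h)
  push_cast at hc
  refine (Nat.isCoprime_iff_coprime.mpr hcop).symm.dvd_of_dvd_mul_left ⟨y' - y + z' - z - c, ?_⟩
  rw [hB', hC] at hc
  push_cast at hc
  linear_combination -hc

theorem eq_of_mem_staircase_of_modEq (hn : 0 < n) (hcop : a.Coprime A)
    (hA : A = 4 * n * (n + s) + 1) (hB : B = A + a * (2 * n - 1)) (hC : C = A + 4 * a * n)
    {p q : ℕ × ℕ} (hp : p ∈ staircase n s) (hq : q ∈ staircase n s)
    (h : p.1 * B + p.2 * C ≡ q.1 * B + q.2 * C [MOD A]) : p = q :=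
  eq_of_mem_staircase_of_dvd hp hq (by exact_mod_cast hA ▸ dvd_weight_sub_of_modEq hn hcop hB hC h)

theorem exists_mem_staircase_modEq (hn : 0 < n) (hcop : a.Coprime A)
    (hA : A = 4 * n * (n + s) + 1) (hB : B = A + a * (2 * n - 1)) (hC : C = A + 4 * a * n)
    (k : ℕ) : ∃ p ∈ staircase n s, p.1 * B + p.2 * C ≡ k [MOD A] := by
  have hA0 : 0 < A := by omega
  obtain ⟨p, hp, hpk⟩ := surjOn_of_injOn_of_card_le (fun p : ℕ × ℕ ↦ (p.1 * B + p.2 * C) % A)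
    (fun p _ ↦ mem_range.2 (Nat.mod_lt _ hA0))
    (fun p hp q hq h ↦ eq_of_mem_staircase_of_modEq hn hcop hA hB hC hp hq h)
    (by rw [card_range, card_staircase hn, hA]) (mem_range.2 (Nat.mod_lt k hA0))
  exact ⟨p, hp, hpk⟩

theorem exists_mem_staircase_le_modEq (hn : 0 < n) (hsa : 2 ≤ s + a)
    (hA : A = 4 * n * (n + s) + 1) (hB : B = A + a * (2 * n - 1)) (hC : C = A + 4 * a * n)
    (y z : ℕ) : ∃ p ∈ staircase n s,
      p.1 * B + p.2 * C ≤ y * B + z * C ∧ p.1 * B + p.2 * C ≡ y * B + z * C [MOD A] := by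
  have hB' : (B : ℤ) = A + a * (2 * n - 1) := by rw [hB]; push_cast [show 1 ≤ 2 * n by omega]; ring
  induction h : y * B + z * C using Nat.strong_induction_on generalizing y z with
  | _ N ih =>
  have descend : ∀ y' z' t, 0 < t → y' * B + z' * C + t * A = N → ∃ p ∈ staircase n s,
      p.1 * B + p.2 * C ≤ N ∧ p.1 * B + p.2 * C ≡ N [MOD A] := by
    intro y' z' t ht he
    obtain ⟨p, hp, hle, hmod⟩ := ih _ (by rw [← he]; nlinarith) y' z' rfl
    exact ⟨p, hp, by omega, hmod.trans (he ▸ (Nat.add_mul_mod_self_right _ _ _).symm)⟩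
  by_cases hy : 4 * n ≤ y
  · refine descend (y - 4 * n) (z + 2 * n - 1) (2 * n + 1) (by omega) ?_
    zify [hy, show 1 ≤ z + 2 * n by omega] at h ⊢
    rw [← h, hB', hC]
    push_cast
    ring
  by_cases hz : s + 2 * n ≤ z
  · refine descend (y + 2 * n + 1) (z - (s + 2 * n)) (s + a - 1) (by omega) ?_
    zify [hz, show 1 ≤ s + a by omega] at h ⊢
    rw [← h, hB', hC, hA]
    push_cast
    ring
  by_cases hyz : s < z ∧ 2 * n - 1 ≤ y
  · refine descend (y - (2 * n - 1)) (z - (s + 1)) (s + a + 2 * n) (by omega) ?_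
    zify [hyz.2, show s + 1 ≤ z by omega, show 1 ≤ 2 * n by omega] at h ⊢
    rw [← h, hB', hC, hA]
    push_cast
    ring
  exact ⟨(y, z), mem_staircase.2 (by omega), h.le, h ▸ .refl _⟩

theorem le_of_mem_staircase (hBC : (2 * n + 1) * B ≤ (2 * n - 1) * C) {p : ℕ × ℕ}
    (hp : p ∈ staircase n s) :
    p.1 * B + p.2 * C ≤ (2 * n - 2) * B + (s + 2 * n - 1) * C := by
  rcases mem_staircase.1 hp with ⟨hy, hz⟩ | ⟨hy, -, hz⟩
  · calc p.1 * B + p.2 * C ≤ (2 * n - 2 + (2 * n + 1)) * B + s * C := by gcongr; omega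
      _ ≤ (2 * n - 2) * B + (2 * n - 1) * C + s * C := by rw [add_mul]; gcongr
      _ = (2 * n - 2) * B + (s + 2 * n - 1) * C := by
        rw [show s + 2 * n - 1 = 2 * n - 1 + s by omega]; ring
  · gcongr <;> omega

theorem frobeniusNumber_of_staircase (hn : 0 < n) (hcop : a.Coprime A)
    (hA : A = 4 * n * (n + s) + 1) (hB : B = A + a * (2 * n - 1)) (hC : C = A + 4 * a * n)
    (hBC : (2 * n + 1) * B ≤ (2 * n - 1) * C) :
    FrobeniusNumber ((2 * n - 2) * B + (s + 2 * n - 1) * C - A) {A, B, C} := by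
  have ha : 2 ≤ a := by
    by_contra! ha
    interval_cases a <;> simp only [hB, hC] at hBC <;> zify [show 1 ≤ 2 * n by omega] at hBC <;>
      nlinarith
  set W := (2 * n - 2) * B + (s + 2 * n - 1) * C
  have hcorner : (2 * n - 2, s + 2 * n - 1) ∈ staircase n s := mem_staircase.2 (by omega)
  have hAW : A ≤ W := le_add_left (le_mul_of_one_le_of_le (by omega) (by omega))
  refine frobeniusNumber_of_modEq (A := A) (AddSubmonoid.subset_closure (by simp))
    (fun k ↦ ?_) (fun x hx hxW ↦ ?_) <;> rw [Nat.sub_add_cancel hAW]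
  · obtain ⟨p, hp, hpk⟩ := exists_mem_staircase_modEq hn hcop hA hB hC k
    exact ⟨_, AddSubmonoid.mem_closure_triple.2 ⟨0, p.1, p.2, by simp⟩, le_of_mem_staircase hBC hp,
      hpk⟩
  · obtain ⟨u, y, z, rfl⟩ := AddSubmonoid.mem_closure_triple.1 hx
    simp only [smul_eq_mul] at hxW ⊢
    obtain ⟨p, hp, hle, hmod⟩ := exists_mem_staircase_le_modEq hn (by omega) hA hB hC y z
    have hpW : p.1 * B + p.2 * C ≡ W [MOD A] :=
      calc p.1 * B + p.2 * C ≡ y * B + z * C [MOD A] := hmod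
        _ ≡ u * A + y * B + z * C [MOD A] := by
          rw [add_assoc, add_comm (u * A)]; exact (Nat.add_mul_mod_self_right _ _ _).symm
        _ ≡ W - A [MOD A] := hxW
        _ ≡ W [MOD A] := (Nat.add_mod_right _ A).symm.trans (by rw [Nat.sub_add_cancel hAW])
    rw [eq_of_mem_staircase_of_modEq hn hcop hA hB hC hp hcorner hpW] at hle
    exact hle.trans (by omega)

end Generators

theorem twoStepStar_succ {a n : ℕ} (hn : 2 ≤ n) :
    twoStepStar a (n + 1) = twoStepStar a n + a * (2 * n - 1) := by
  obtain ⟨k, rfl⟩ := Nat.exists_eq_add_of_le' hn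
  simp only [twoStepStar, show k + 2 + 1 - 2 = k + 1 by omega, Nat.add_sub_cancel,
    show 2 * (k + 2) - 1 = 2 * k + 3 by omega]
  ring

theorem twoStepStar_add_two {a n : ℕ} (hn : 2 ≤ n) :
    twoStepStar a (n + 2) = twoStepStar a n + 4 * a * n := by
  obtain ⟨k, rfl⟩ := Nat.exists_eq_add_of_le' hn
  simp only [twoStepStar, Nat.add_sub_cancel]
  ring

theorem coprime_twoStepStar (a n : ℕ) : a.Coprime (twoStepStar a n) := by
  rw [twoStepStar, mul_assoc, Nat.coprime_mul_left_add_right]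
  exact Nat.coprime_one_right a

theorem two_mul_add_one_mul_twoStepStar_succ_le {a n : ℕ} (ha : 0 < a) (hn : 2 ≤ n) :
    (2 * n + 1) * twoStepStar a (n + 1) ≤ (2 * n - 1) * twoStepStar a (n + 2) := by
  obtain ⟨k, rfl⟩ := Nat.exists_eq_add_of_le' hn
  simp only [twoStepStar, show k + 2 + 1 - 2 = k + 1 by omega, Nat.add_sub_cancel,
    show 2 * (k + 2) - 1 = 2 * k + 3 by omega]
  nlinarith [Nat.zero_le (a * k * k), Nat.zero_le (a * k)]

theorem frobenius_twoStepStar_one_two_general (a n : ℕ) (hn4 : n % 4 = 2) (hbig : 4 * n ≤ a * (n - 2)) :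
    ∃ g : ℕ,
      FrobeniusNumber g
        {twoStepStar a n, twoStepStar a (n + 1), twoStepStar a (n + 2)} ∧
      (g : ℚ) = (2 * (n : ℚ) - 2) * twoStepStar a (n + 1) + (((a : ℚ) * ((n : ℚ) - 2) + 4 * (n : ℚ) - 4) / 4) * twoStepStar a (n + 2) - twoStepStar a n := by
  obtain ⟨m, rfl⟩ : ∃ m, n = 4 * m + 2 := ⟨n / 4, by omega⟩
  obtain ⟨s, hs⟩ : ∃ s, a * m = 4 * m + 2 + s :=
    ⟨a * m - (4 * m + 2), by rw [Nat.add_sub_cancel, mul_left_comm] at hbig; omega⟩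
  have ha : 0 < a := Nat.pos_of_ne_zero (by rintro rfl; omega)
  have hA : twoStepStar a (4 * m + 2) = 4 * (4 * m + 2) * (4 * m + 2 + s) + 1 := by
    rw [twoStepStar, Nat.add_sub_cancel, ← hs]; ring
  have hW := frobeniusNumber_of_staircase (by omega) (coprime_twoStepStar _ _) hA
    (twoStepStar_succ (by omega)) (twoStepStar_add_two (by omega))
    (two_mul_add_one_mul_twoStepStar_succ_le ha (by omega))
  refine ⟨_, hW, ?_⟩
  have hAC := twoStepStar_add_two (a := a) (show 2 ≤ 4 * m + 2 by omega)
  have hsQ : (a : ℚ) * m = 4 * m + 2 + s := by exact_mod_cast hs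
  rw [show 2 * (4 * m + 2) - 2 = 8 * m + 2 by omega,
    show s + 2 * (4 * m + 2) - 1 = s + 8 * m + 3 by omega,
    Nat.cast_sub (le_add_left (le_mul_of_one_le_of_le (by omega) (hAC ▸ Nat.le_add_right _ _)))]
  push_cast
  linear_combination -(twoStepStar a (4 * m + 2 + 2) : ℚ) * hsQ

theorem frobenius_twoStepStar_one_two (a n : ℕ) (ha : 5 ≤ a) (ha4 : a % 4 = 1) (hn : 3 ≤ n) (hn4 : n % 4 = 2) (hbig : 4 * n ≤ a * (n - 2)) :
    ∃ g : ℕ,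
      FrobeniusNumber g
        {twoStepStar a n, twoStepStar a (n + 1), twoStepStar a (n + 2)} ∧
      (g : ℚ) = (2 * (n : ℚ) - 2) * twoStepStar a (n + 1) + (((a : ℚ) * ((n : ℚ) - 2) + 4 * (n : ℚ) - 4) / 4) * twoStepStar a (n + 2) - twoStepStar a n :=
  frobenius_twoStepStar_one_two_general a n hn4 hbig
end

section
/- Let a and n be integers with a ≥ 7, a ≡ 3 (mod 4), n ≥ 3, n ≡ 1 (mod 4), and a(n−2) ≥ 6n−1. Then the Frobenius number of the triple {S_{a,n}, S_{a,n+1}, S_{a,n+2}} equals (3n−2)·S_{a,n+1} + ((a(n−2)+2n−3)/4)·S_{a,n+2} − S_{a,n}. -/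
set_option maxHeartbeats 1000000

lemma mem_closure_triple {p q r k : ℕ} :
    k ∈ AddSubmonoid.closure ({p, q, r} : Set ℕ) ↔ ∃ x y z : ℕ, x*p + y*q + z*r = k := by
  have hset : ({p, q, r} : Set ℕ) = {p} ∪ {q, r} := by
    rw [Set.insert_eq]
  rw [hset, AddSubmonoid.closure_union, AddSubmonoid.mem_sup]
  constructor
  · rintro ⟨u, hu, v, hv, rfl⟩
    rw [AddSubmonoid.mem_closure_singleton] at hu
    rw [AddSubmonoid.mem_closure_pair] at hv
    obtain ⟨x, rfl⟩ := hu
    obtain ⟨y, z, rfl⟩ := hv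
    exact ⟨x, y, z, by simp only [smul_eq_mul]; ring⟩
  · rintro ⟨x, y, z, rfl⟩
    refine ⟨x*p, AddSubmonoid.mem_closure_singleton.mpr ⟨x, by simp [smul_eq_mul]⟩,
           y*q + z*r, (AddSubmonoid.mem_closure_pair _ _ _).mpr ⟨y, z, by simp [smul_eq_mul]⟩,
           by ring⟩

lemma core_nonrep (n a t h A B C : ℤ) (hn : 5 ≤ n) (ha : 7 ≤ a) (hh : 1 ≤ h)
    (ht : t = h + 2*n - 2) (hK : a*(n-2) = 4*h + 6*n - 5)
    (hA : A = a*n*(n-2)+1) (hB : B = A + a*(2*n-1)) (hC : C = A + 4*a*n)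
    (X Y Z : ℤ) (hX : 0 ≤ X) (hY : 0 ≤ Y) (hZ : 0 ≤ Z)
    (heq : X*A + Y*B + Z*C = (3*n-3+t)*A + a*((2*n-1)*(3*n-2)+4*n*t)) : False := by
  obtain ⟨W, hW⟩ : ∃ W : ℤ, W = (2*n-1)*(3*n-2)+4*n*t := ⟨_, rfl⟩
  rw [← hW] at heq
  have ht' : 2*n - 1 ≤ t := by linarith
  have hApos : 0 < A := by
    nlinarith [mul_pos (mul_pos (show (0:ℤ) < a by linarith) (show (0:ℤ) < n by linarith))
      (show (0:ℤ) < n-2 by linarith)]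
  have h4npos : (0:ℤ) < 4*n := by linarith
  have hEq1 : a*(W - ((2*n-1)*Y + 4*n*Z)) = A*(X+Y+Z - (3*n-3+t)) := by
    linear_combination (-1 : ℤ)*heq + Y*hB + Z*hC
  have hcop : IsCoprime A a := ⟨1, -(n*(n-2)), by linear_combination hA⟩
  have hdW : A ∣ (W - ((2*n-1)*Y + 4*n*Z)) := by
    refine hcop.dvd_of_dvd_mul_right ⟨X+Y+Z - (3*n-3+t), ?_⟩
    linear_combination hEq1
  obtain ⟨kk, hkk⟩ := hdW
  have hsum : X+Y+Z = 3*n-3+t+a*kk := by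
    have h5 : A*(X+Y+Z - (3*n-3+t)) = A*(a*kk) := by linear_combination a*hkk - hEq1
    have h6 := mul_left_cancel₀ (ne_of_gt hApos) h5
    linarith
  have hU : (2*n-1)*Y + 4*n*Z = W - kk*A := by linear_combination -hkk
  have hd1 : (4*n : ℤ) ∣ (Y - (2*n-1)*(W - kk*A)) :=
    ⟨(1-n)*Y - (2*n-1)*Z, by linear_combination (2*n-1)*hU⟩
  rcases (by omega : kk ≤ -2 ∨ kk = -1 ∨ kk = 0 ∨ kk = 1 ∨ kk = 2 ∨ 3 ≤ kk) with
    hc | hc | hc | hc | hc | hc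
  · -- kk ≤ -2
    have hyz : (2*n-1)*Y + 4*n*Z ≤ 4*n*(Y+Z) := by
      nlinarith [mul_nonneg (show (0:ℤ) ≤ 2*n+1 by linarith) hY]
    have hyz2 : Y + Z ≤ 3*n-3+t+a*kk := by linarith
    have e1 : 4*n*(Y+Z) ≤ 4*n*(3*n-3+t+a*kk) :=
      mul_le_mul_of_nonneg_left hyz2 (by linarith)
    have hI7 : W + 2*(A+4*a*n) - 4*n*(3*n-3+t) = 6*n^2-5*n+4+8*n*a+8*n*h := by
      linear_combination hW + 2*hA + 2*n*hK
    have hm1 : 0 ≤ (-kk-2)*(A + 4*a*n) := by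
      refine mul_nonneg (by omega) ?_
      nlinarith [mul_pos (mul_pos (show (0:ℤ) < 4 by norm_num)
        (show (0:ℤ) < a by linarith)) (show (0:ℤ) < n by linarith)]
    have hpos : 0 < 6*n^2-5*n+4+8*n*a+8*n*h := by
      nlinarith [mul_pos (show (0:ℤ) < n by linarith) (show (0:ℤ) < a by linarith),
        mul_pos (show (0:ℤ) < n by linarith) (show (0:ℤ) < h by linarith), sq_nonneg n]
    linarith [hU, hyz, e1, hm1, hI7, hpos]
  · -- kk = -1
    subst hc
    have hd2 : (4*n:ℤ) ∣ (Y - (2*n-3)) := by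
      obtain ⟨u, hu⟩ := hd1
      exact ⟨u + ((n-1)*(3*n-2) + t*(2*n-1) + (h*(2*n-1)+3*n^2-4*n+1) + 1), by
        linear_combination hu + (2*n-1)*hW + (2*n-1)*hA + (2*n-1)*n*hK⟩
    obtain ⟨s, hs⟩ := hd2
    have hs0 : 0 ≤ s := by
      by_contra hcon
      push_neg at hcon
      have h1 : s ≤ -1 := by omega
      have h2 : 4*n*s ≤ 4*n*(-1) := mul_le_mul_of_nonneg_left h1 (by linarith)
      linarith [hs, hY]
    have hZs : Z + (2*n-1)*s = 2*t+1 := by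
      have h7 : (4*n) * (Z + (2*n-1)*s) = (4*n) * (2*t+1) := by
        linear_combination hU - (2*n-1)*hs + hW + hA + n*hK - 4*n*ht
      exact mul_left_cancel₀ (ne_of_gt h4npos) h7
    have hfin : X + (2*n+1)*s = n-1-t-a := by linear_combination hsum - hs - hZs
    nlinarith [mul_nonneg (show (0:ℤ) ≤ 2*n+1 by linarith) hs0]
  · -- kk = 0
    subst hc
    have hd2 : (4*n:ℤ) ∣ (Y - (3*n-2)) := by
      obtain ⟨u, hu⟩ := hd1
      exact ⟨u + ((n-1)*(3*n-2) + t*(2*n-1)), by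
        linear_combination hu + (2*n-1)*hW⟩
    obtain ⟨s, hs⟩ := hd2
    have hs0 : 0 ≤ s := by
      by_contra hcon
      push_neg at hcon
      have h1 : s ≤ -1 := by omega
      have h2 : 4*n*s ≤ 4*n*(-1) := mul_le_mul_of_nonneg_left h1 (by linarith)
      linarith [hs, hY]
    have hZs : Z + (2*n-1)*s = t := by
      have h7 : (4*n) * (Z + (2*n-1)*s) = (4*n) * t := by
        linear_combination hU - (2*n-1)*hs + hW
      exact mul_left_cancel₀ (ne_of_gt h4npos) h7
    have hfin : X + (2*n+1)*s = -1 := by linear_combination hsum - hs - hZs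
    nlinarith [mul_nonneg (show (0:ℤ) ≤ 2*n+1 by linarith) hs0]
  · -- kk = 1
    subst hc
    have hd2 : (4*n:ℤ) ∣ (Y - (4*n-1)) := by
      obtain ⟨u, hu⟩ := hd1
      exact ⟨u + ((n-1)*(3*n-2) + t*(2*n-1) - (h*(2*n-1)+3*n^2-4*n+1) - 1), by
        linear_combination hu + (2*n-1)*hW - (2*n-1)*hA - (2*n-1)*n*hK⟩
    obtain ⟨s, hs⟩ := hd2
    have hs0 : 0 ≤ s := by
      by_contra hcon
      push_neg at hcon
      have h1 : s ≤ -1 := by omega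
      have h2 : 4*n*s ≤ 4*n*(-1) := mul_le_mul_of_nonneg_left h1 (by linarith)
      linarith [hs, hY]
    have hZs : Z + (2*n-1)*s = -1 := by
      have h7 : (4*n) * (Z + (2*n-1)*s) = (4*n) * (-1) := by
        linear_combination hU - (2*n-1)*hs + hW - hA - n*hK + 4*n*ht
      exact mul_left_cancel₀ (ne_of_gt h4npos) h7
    nlinarith [mul_nonneg (show (0:ℤ) ≤ 2*n-1 by linarith) hs0]
  · -- kk = 2
    subst hc
    have hd2 : (4*n:ℤ) ∣ (Y - n) := by
      obtain ⟨u, hu⟩ := hd1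
      exact ⟨u + ((n-1)*(3*n-2) + t*(2*n-1) - 2*(h*(2*n-1)+3*n^2-4*n+1) - 1), by
        linear_combination hu + (2*n-1)*hW - 2*(2*n-1)*hA - 2*(2*n-1)*n*hK⟩
    obtain ⟨s, hs⟩ := hd2
    have hs0 : 0 ≤ s := by
      by_contra hcon
      push_neg at hcon
      have h1 : s ≤ -1 := by omega
      have h2 : 4*n*s ≤ 4*n*(-1) := mul_le_mul_of_nonneg_left h1 (by linarith)
      linarith [hs, hY]
    have hZs : Z + (2*n-1)*s = -(h+1) := by
      have h7 : (4*n) * (Z + (2*n-1)*s) = (4*n) * (-(h+1)) := by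
        linear_combination hU - (2*n-1)*hs + hW - 2*hA - 2*n*hK + 4*n*ht
      exact mul_left_cancel₀ (ne_of_gt h4npos) h7
    nlinarith [mul_nonneg (show (0:ℤ) ≤ 2*n-1 by linarith) hs0]
  · -- 3 ≤ kk
    have hU0 : 0 ≤ (2*n-1)*Y + 4*n*Z :=
      add_nonneg (mul_nonneg (by linarith) hY) (mul_nonneg (by linarith) hZ)
    have hI3 : 3*A - W = 4*n^2+8*n*h+1 := by
      linear_combination -hW + 3*hA + 3*n*hK - 4*n*ht
    have hkA : 3*A ≤ kk*A := by
      nlinarith [mul_nonneg (show (0:ℤ) ≤ kk - 3 by omega) hApos.le]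
    nlinarith [hU, hU0, hI3, hkA, mul_pos (show (0:ℤ) < n by linarith)
      (show (0:ℤ) < h by linarith), sq_nonneg n]

lemma core_mem (n a t h A B C : ℤ) (hn : 5 ≤ n) (ha : 7 ≤ a) (hh : 1 ≤ h)
    (ht : t = h + 2*n - 2) (hK : a*(n-2) = 4*h + 6*n - 5)
    (hA : A = a*n*(n-2)+1) (hB : B = A + a*(2*n-1)) (hC : C = A + 4*a*n)
    (k : ℤ) (hk : (3*n-3+t)*A + a*((2*n-1)*(3*n-2)+4*n*t) + 1 ≤ k) :
    ∃ X Y Z : ℤ, 0 ≤ X ∧ 0 ≤ Y ∧ 0 ≤ Z ∧ X*A + Y*B + Z*C = k := by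
  obtain ⟨W, hW⟩ : ∃ W : ℤ, W = (2*n-1)*(3*n-2)+4*n*t := ⟨_, rfl⟩
  rw [← hW] at hk
  have ht' : 2*n - 1 ≤ t := by linarith
  have hApos : 0 < A := by
    nlinarith [mul_pos (mul_pos (show (0:ℤ) < a by linarith) (show (0:ℤ) < n by linarith))
      (show (0:ℤ) < n-2 by linarith)]
  have h4npos : (0:ℤ) < 4*n := by linarith
  have hI1 : 4*n*(t+1) = A + (2*n-1)*(n+1) := by linear_combination 4*n*ht - hA - n*hK
  have hI2 : (2*n-1)*(3*n-1) + 4*n*h = A := by linear_combination -hA - n*hK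
  obtain ⟨M, hM⟩ : ∃ M : ℤ, M = (n*(n-2)*(A - k % A)) % A := ⟨_, rfl⟩
  have hM0 : 0 ≤ M := by rw [hM]; exact Int.emod_nonneg _ (ne_of_gt hApos)
  have hMA : M < A := by rw [hM]; exact Int.emod_lt_of_pos _ hApos
  have hkM : A ∣ (a*M - k) := by
    refine ⟨A - 1 - (k % A) - (k / A) - a * ((n*(n-2)*(A - k % A)) / A), ?_⟩
    have e1 : k % A = k - A*(k/A) := by rw [Int.emod_def]
    have e2 : M = n*(n-2)*(A - k % A) - A*((n*(n-2)*(A - k % A))/A) := by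
      rw [hM, Int.emod_def]
    linear_combination a*e2 + e1 + ((k % A) - A)*hA
  obtain ⟨x₀, hx₀⟩ : ∃ x₀ : ℤ, x₀ = ((2*n-1)*M) % (4*n) := ⟨_, rfl⟩
  have hx0l : 0 ≤ x₀ := by rw [hx₀]; exact Int.emod_nonneg _ (ne_of_gt h4npos)
  have hx0u : x₀ < 4*n := by rw [hx₀]; exact Int.emod_lt_of_pos _ h4npos
  have e3 : x₀ = (2*n-1)*M - 4*n*(((2*n-1)*M)/(4*n)) := by rw [hx₀, Int.emod_def]
  obtain ⟨y₀, hy₀⟩ : ∃ y₀ : ℤ, M = (2*n-1)*x₀ + 4*n*y₀ :=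
    ⟨(1-n)*M + (2*n-1)*(((2*n-1)*M)/(4*n)), by linear_combination (-(2*n-1))*e3⟩
  have hylb : -(2*n) + 2 ≤ y₀ := by
    by_contra hcon
    push_neg at hcon
    have h1 : y₀ ≤ -2*n+1 := by omega
    have h2 : 4*n*y₀ ≤ 4*n*(-2*n+1) := mul_le_mul_of_nonneg_left h1 (by linarith)
    have h3 : (2*n-1)*x₀ ≤ (2*n-1)*(4*n-1) := mul_le_mul_of_nonneg_left (by omega) (by linarith)
    nlinarith [hy₀, hM0]
  have hyub : y₀ ≤ t := by
    by_contra hcon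
    push_neg at hcon
    have h1 : t+1 ≤ y₀ := by omega
    have h2 : 4*n*(t+1) ≤ 4*n*y₀ := mul_le_mul_of_nonneg_left h1 (by linarith)
    have h3 : 0 ≤ (2*n-1)*x₀ := mul_nonneg (by linarith) hx0l
    have h4 : (0:ℤ) ≤ (2*n-1)*(n+1) := mul_nonneg (by linarith) (by linarith)
    linarith [hy₀, hMA, hI1]
  have hyub2 : 3*n-1 ≤ x₀ → y₀ ≤ h-1 := by
    intro hx
    by_contra hcon
    push_neg at hcon
    have h1 : h ≤ y₀ := by omega
    have h2 : 4*n*h ≤ 4*n*y₀ := mul_le_mul_of_nonneg_left h1 (by linarith)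
    have h3 : (2*n-1)*(3*n-1) ≤ (2*n-1)*x₀ := mul_le_mul_of_nonneg_left hx (by linarith)
    linarith [hy₀, hMA, hI2]
  obtain ⟨xx, yy, j, hxx0, hyy0, hreg, hrep⟩ :
      ∃ xx yy j : ℤ, 0 ≤ xx ∧ 0 ≤ yy ∧
        ((xx ≤ 3*n-2 ∧ yy ≤ t) ∨ (xx ≤ 4*n-1 ∧ yy ≤ h-1)) ∧
        (2*n-1)*xx + 4*n*yy = M + j*A := by
    rcases le_or_gt 0 y₀ with hy | hy
    · rcases le_or_gt x₀ (3*n-2) with hx | hx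
      · exact ⟨x₀, y₀, 0, hx0l, hy, Or.inl ⟨hx, hyub⟩, by linear_combination -hy₀⟩
      · exact ⟨x₀, y₀, 0, hx0l, hy, Or.inr ⟨by omega, hyub2 (by omega)⟩,
          by linear_combination -hy₀⟩
    · rcases le_or_gt (n+1) x₀ with hx | hx
      · refine ⟨x₀-(n+1), y₀+t+1, 1, by omega, by linarith, Or.inl ⟨by omega, by linarith⟩, ?_⟩
        linear_combination -hy₀ + hI1
      · rcases le_or_gt 0 (y₀ + h) with hyh | hyh
        · refine ⟨x₀+3*n-1, y₀+h, 1, by omega, hyh, Or.inr ⟨by omega, by omega⟩, ?_⟩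
          linear_combination -hy₀ + hI2
        · refine ⟨x₀+2*n-2, y₀+h+t+1, 2, by omega, by linarith,
            Or.inl ⟨by omega, by omega⟩, ?_⟩
          linear_combination -hy₀ + hI1 + hI2
  have hB0 : 0 ≤ B := by
    nlinarith [mul_nonneg (show (0:ℤ) ≤ a by linarith) (show (0:ℤ) ≤ 2*n-1 by linarith)]
  have hC0 : 0 ≤ C := by
    nlinarith [mul_nonneg (mul_nonneg (show (0:ℤ) ≤ 4 by norm_num)
      (show (0:ℤ) ≤ a by linarith)) (show (0:ℤ) ≤ n by linarith)]
  have hBC : B ≤ C := by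
    nlinarith [mul_nonneg (show (0:ℤ) ≤ a by linarith) (show (0:ℤ) ≤ 2*n+1 by linarith)]
  have hvle : xx*B + yy*C ≤ (3*n-2)*B + t*C := by
    rcases hreg with ⟨h1, h2⟩ | ⟨h1, h2⟩
    · exact add_le_add (mul_le_mul_of_nonneg_right h1 hB0) (mul_le_mul_of_nonneg_right h2 hC0)
    · have e1 : xx*B + yy*C ≤ (4*n-1)*B + (h-1)*C :=
        add_le_add (mul_le_mul_of_nonneg_right h1 hB0) (mul_le_mul_of_nonneg_right h2 hC0)
      have e2 : (n+1)*B ≤ (2*n-1)*C := by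
        nlinarith [mul_le_mul_of_nonneg_left hBC (show (0:ℤ) ≤ 2*n-1 by linarith),
          mul_nonneg (show (0:ℤ) ≤ n-2 by linarith) hB0]
      have ht2 : t - h + 1 = 2*n-1 := by linarith
      have e4 : (t-h+1)*C = (2*n-1)*C := by rw [ht2]
      linarith [e1, e2, e4]
  have hgeq : (3*n-2)*B + t*C = ((3*n-3+t)*A + a*W) + A := by
    linear_combination (3*n-2)*hB + t*hC - a*hW
  have hdvk : A ∣ (k - (xx*B + yy*C)) := by
    obtain ⟨w1, hw1⟩ := hkM
    exact ⟨-w1 - (xx+yy+a*j), by linear_combination -hw1 - xx*hB - yy*hC - a*hrep⟩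
  obtain ⟨q, hq⟩ := hdvk
  have hq0 : 0 ≤ q := by
    by_contra hcon
    push_neg at hcon
    have h1 : q ≤ -1 := by omega
    have h2 : A*q ≤ A*(-1) := mul_le_mul_of_nonneg_left h1 hApos.le
    linarith [hq, hvle, hgeq, hk]
  exact ⟨q, xx, yy, hq0, hxx0, hyy0, by linear_combination -hq⟩

theorem frobenius_twoStepStar_three_one (a n : ℕ) (ha : 7 ≤ a) (ha4 : a % 4 = 3) (hn : 3 ≤ n) (hn4 : n % 4 = 1) (hbig : 6 * n - 1 ≤ a * (n - 2)) :
    ∃ g : ℕ,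
      FrobeniusNumber g
        {twoStepStar a n, twoStepStar a (n + 1), twoStepStar a (n + 2)} ∧
      (g : ℚ) = (3 * (n : ℚ) - 2) * twoStepStar a (n + 1) + (((a : ℚ) * ((n : ℚ) - 2) + 2 * (n : ℚ) - 3) / 4) * twoStepStar a (n + 2) - twoStepStar a n := by
  obtain ⟨m, rfl⟩ : ∃ m, n = 4*m+5 := ⟨(n-5)/4, by omega⟩
  obtain ⟨b, rfl⟩ : ∃ b, a = 4*b+7 := ⟨(a-7)/4, by omega⟩
  have eA : twoStepStar (4*b+7) (4*m+5) = (4*b+7)*(4*m+5)*(4*m+3)+1 := by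
    show (4*b+7)*(4*m+5)*(4*m+5-2)+1 = _
    have e : 4*m+5-2 = 4*m+3 := by omega
    rw [e]
  have eB : twoStepStar (4*b+7) (4*m+5+1) = (4*b+7)*(4*m+6)*(4*m+4)+1 := by
    show (4*b+7)*(4*m+5+1)*(4*m+5+1-2)+1 = _
    have e : 4*m+5+1-2 = 4*m+4 := by omega
    rw [e]
  have eC : twoStepStar (4*b+7) (4*m+5+2) = (4*b+7)*(4*m+7)*(4*m+5)+1 := by
    show (4*b+7)*(4*m+5+2)*(4*m+5+2-2)+1 = _
    have e : 4*m+5+2-2 = 4*m+5 := by omega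
    rw [e]
  have hm0 : (0:ℤ) ≤ (m:ℤ) := Int.natCast_nonneg m
  have hb0 : (0:ℤ) ≤ (b:ℤ) := Int.natCast_nonneg b
  have ebig : 6*(4*m+5) - 1 = 24*m+29 := by omega
  have esub : 4*m+5-2 = 4*m+3 := by omega
  rw [esub, ebig] at hbig
  have hbigZ : (24*(m:ℤ)+29) ≤ (4*(b:ℤ)+7)*(4*(m:ℤ)+3) := by exact_mod_cast hbig
  have hn' : (5:ℤ) ≤ 4*(m:ℤ)+5 := by linarith
  have ha' : (7:ℤ) ≤ 4*(b:ℤ)+7 := by linarith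
  have hh' : (1:ℤ) ≤ 4*(b:ℤ)*(m:ℤ)+3*(b:ℤ)+(m:ℤ)-1 := by nlinarith [hbigZ]
  have ht'' : (4*(b:ℤ)*(m:ℤ)+3*(b:ℤ)+9*(m:ℤ)+7)
      = (4*(b:ℤ)*(m:ℤ)+3*(b:ℤ)+(m:ℤ)-1) + 2*(4*(m:ℤ)+5) - 2 := by ring
  have hK' : (4*(b:ℤ)+7)*((4*(m:ℤ)+5)-2)
      = 4*(4*(b:ℤ)*(m:ℤ)+3*(b:ℤ)+(m:ℤ)-1) + 6*(4*(m:ℤ)+5) - 5 := by ring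
  have hA' : ((twoStepStar (4*b+7) (4*m+5) : ℕ) : ℤ)
      = (4*(b:ℤ)+7)*(4*(m:ℤ)+5)*((4*(m:ℤ)+5)-2)+1 := by
    rw [eA]; push_cast; ring
  have hB' : ((twoStepStar (4*b+7) (4*m+5+1) : ℕ) : ℤ)
      = ((twoStepStar (4*b+7) (4*m+5) : ℕ) : ℤ) + (4*(b:ℤ)+7)*(2*(4*(m:ℤ)+5)-1) := by
    rw [eA, eB]; push_cast; ring
  have hC' : ((twoStepStar (4*b+7) (4*m+5+2) : ℕ) : ℤ)
      = ((twoStepStar (4*b+7) (4*m+5) : ℕ) : ℤ) + 4*(4*(b:ℤ)+7)*(4*(m:ℤ)+5) := by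
    rw [eA, eC]; push_cast; ring
  have hgval : (((12*m+12) * twoStepStar (4*b+7) (4*m+5+1)
      + (4*b*m+3*b+9*m+7) * twoStepStar (4*b+7) (4*m+5+2) + (4*b+7)*(8*m+9) : ℕ) : ℤ)
      = (3*(4*(m:ℤ)+5)-3+(4*(b:ℤ)*(m:ℤ)+3*(b:ℤ)+9*(m:ℤ)+7))
        * ((twoStepStar (4*b+7) (4*m+5) : ℕ) : ℤ)
      + (4*(b:ℤ)+7)*((2*(4*(m:ℤ)+5)-1)*(3*(4*(m:ℤ)+5)-2)
        + 4*(4*(m:ℤ)+5)*(4*(b:ℤ)*(m:ℤ)+3*(b:ℤ)+9*(m:ℤ)+7)) := by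
    rw [eA, eB, eC]; push_cast; ring
  refine ⟨(12*m+12) * twoStepStar (4*b+7) (4*m+5+1)
      + (4*b*m+3*b+9*m+7) * twoStepStar (4*b+7) (4*m+5+2) + (4*b+7)*(8*m+9), ⟨?_, ?_⟩, ?_⟩
  · -- not representable
    simp only [Set.mem_setOf_eq]
    intro hmem
    rw [mem_closure_triple] at hmem
    obtain ⟨x, y, z, hxyz⟩ := hmem
    refine core_nonrep (4*(m:ℤ)+5) (4*(b:ℤ)+7) (4*(b:ℤ)*(m:ℤ)+3*(b:ℤ)+9*(m:ℤ)+7)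
      (4*(b:ℤ)*(m:ℤ)+3*(b:ℤ)+(m:ℤ)-1) _ _ _ hn' ha' hh' ht'' hK' hA' hB' hC'
      (x:ℤ) (y:ℤ) (z:ℤ) (Int.natCast_nonneg x) (Int.natCast_nonneg y) (Int.natCast_nonneg z) ?_
    rw [← hgval]
    exact_mod_cast congrArg (Nat.cast : ℕ → ℤ) hxyz
  · -- upper bound
    intro k hk
    simp only [Set.mem_setOf_eq] at hk
    by_contra hlt
    push_neg at hlt
    apply hk
    rw [mem_closure_triple]
    have hkZ : (3*(4*(m:ℤ)+5)-3+(4*(b:ℤ)*(m:ℤ)+3*(b:ℤ)+9*(m:ℤ)+7))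
        * ((twoStepStar (4*b+7) (4*m+5) : ℕ) : ℤ)
        + (4*(b:ℤ)+7)*((2*(4*(m:ℤ)+5)-1)*(3*(4*(m:ℤ)+5)-2)
          + 4*(4*(m:ℤ)+5)*(4*(b:ℤ)*(m:ℤ)+3*(b:ℤ)+9*(m:ℤ)+7)) + 1 ≤ (k:ℤ) := by
      rw [← hgval]
      exact_mod_cast Nat.succ_le_of_lt hlt
    obtain ⟨X, Y, Z, hX, hY, hZc, heqk⟩ := core_mem (4*(m:ℤ)+5) (4*(b:ℤ)+7)
      (4*(b:ℤ)*(m:ℤ)+3*(b:ℤ)+9*(m:ℤ)+7) (4*(b:ℤ)*(m:ℤ)+3*(b:ℤ)+(m:ℤ)-1)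
      _ _ _ hn' ha' hh' ht'' hK' hA' hB' hC' (k:ℤ) hkZ
    refine ⟨X.toNat, Y.toNat, Z.toNat, ?_⟩
    have hfin : ((X.toNat * twoStepStar (4*b+7) (4*m+5) + Y.toNat * twoStepStar (4*b+7) (4*m+5+1)
        + Z.toNat * twoStepStar (4*b+7) (4*m+5+2) : ℕ) : ℤ) = (k:ℤ) := by
      push_cast [Int.toNat_of_nonneg hX, Int.toNat_of_nonneg hY, Int.toNat_of_nonneg hZc]
      linarith [heqk]
    exact_mod_cast hfin
  · -- closed formula
    rw [eA, eB, eC]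
    push_cast
    ring
end
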